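/- arXiv:1611.00090 — 4 statements merged into one kernel-verified Lean document; each statement's English description precedes it below -/
import Mathlib

section
/- Let f : ℝ^n → ℝ be continuously differentiable such that for all x, y ∈ ℝ^n, ‖∇f(x) − ∇f(y)‖ ≤ L‖x − y‖ and ⟨∇f(x) − ∇f(y), x − y⟩ ≥ μ‖x − y‖², where 0 < μ ≤ L. Let x* be a global minimizer of f on ℝ^n and f* = f(x*). Let (x_i) be a sequence such that for each i there exists γ_i ∈ ℝ with x_{i+1} = x_i − γ_i ∇f(x_i) and f(x_{i+1}) ≤ f(x_i − t ∇f(x_i)) for every t ∈ ℝ. Then for all i ≥ 0, f(x_{i+1}) − f* ≤ ((L − μ)/(L + μ))² (f(x_i) − f*). -/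
open scoped RealInnerProductSpace

/-!
Exact line search makes the new gradient orthogonal both to the old gradient and to the step
just taken. Between any two of the points `xᵢ`, `xᵢ₊₁`, `x*`, the quadratic upper bound at one
point and the quadratic lower bound at the other, compared at a gradient step, give the
interpolation inequality of `F_{μ,L}`. A fixed nonnegative combination of these three
inequalities, the two orthogonality relations and two squared norms is exactly the claimed
contraction (the certificate of de Klerk, Glineur and Taylor).
-/

open Set Filter Topology

section Interpolation

variable {E : Type*} [NormedAddCommGroup E] [InnerProductSpace ℝ E]

/-- The interpolation inequality of `F_{μ,L}` for the point–gradient–value triples `(x, g, fx)`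
and `(y, h, fy)`, multiplied by `L - μ`. -/
def InterpolationCondition (μ L : ℝ) (x g : E) (fx : ℝ) (y h : E) (fy : ℝ) : Prop :=
  ‖g - h - μ • (x - y)‖ ^ 2 ≤ (L - μ) * (2 * (fx - fy - ⟪h, x - y⟫) - μ * ‖x - y‖ ^ 2)

theorem interpolationCondition_of_quadratic_bounds {μ L : ℝ} (hμL : μ < L) {f : E → ℝ}
    {a b ga gb : E} (hup : ∀ z, f z ≤ f a + ⟪ga, z - a⟫ + L / 2 * ‖z - a‖ ^ 2)
    (hlow : ∀ z, f b + ⟪gb, z - b⟫ + μ / 2 * ‖z - b‖ ^ 2 ≤ f z) :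
    InterpolationCondition μ L a ga (f a) b gb (f b) := by
  unfold InterpolationCondition
  set w := a - b
  set u := ga - gb - μ • w
  set c := (L - μ)⁻¹
  have hc : (L - μ) * c = 1 := mul_inv_cancel₀ (sub_pos.2 hμL).ne'
  have hu : ‖u‖ ^ 2 = ⟪ga, u⟫ - ⟪gb, u⟫ - μ * ⟪w, u⟫ := by
    rw [← real_inner_self_eq_norm_sq]
    simp only [u, inner_sub_left, real_inner_smul_left]
  -- compare the two bounds at the minimizer of their gap
  have hgap := (hlow (a - c • u)).trans (hup (a - c • u))
  rw [show a - c • u - b = w - c • u by simp only [w]; abel, sub_sub_cancel_left] at hgap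
  simp only [inner_neg_right, inner_sub_right, real_inner_smul_right, norm_neg, norm_smul,
    norm_sub_sq_real, mul_pow, Real.norm_eq_abs, sq_abs] at hgap
  linear_combination (2 * (L - μ)) * hgap + (2 * (L - μ) * c) * hu
    + (‖u‖ ^ 2 * ((L - μ) * c - 1)) * hc

theorem gap_contraction_of_interpolationCondition {μ L : ℝ} (hμ : 0 < μ) (hμL : μ < L)
    {x₀ x₁ xs g₀ g₁ : E} {f₀ f₁ fs : ℝ}
    (h₀₁ : InterpolationCondition μ L x₀ g₀ f₀ x₁ g₁ f₁)
    (hs₀ : InterpolationCondition μ L xs 0 fs x₀ g₀ f₀)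
    (hs₁ : InterpolationCondition μ L xs 0 fs x₁ g₁ f₁)
    (hg : ⟪g₀, g₁⟫ = 0) (hx : ⟪g₁, x₀ - x₁⟫ = 0) :
    (L + μ) ^ 2 * (f₁ - fs) ≤ (L - μ) ^ 2 * (f₀ - fs) := by
  unfold InterpolationCondition at h₀₁ hs₀ hs₁
  obtain ⟨a, rfl⟩ : ∃ a, x₀ = a + xs := ⟨x₀ - xs, by abel⟩
  obtain ⟨b, rfl⟩ : ∃ b, x₁ = b + xs := ⟨x₁ - xs, by abel⟩
  have hn₀ := sq_nonneg
    ‖(L * (L + 3 * μ)) • a - (L * (L + μ)) • b - (3 * L + μ) • g₀ - (L + μ) • g₁‖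
  have hn₁ := sq_nonneg ‖(2 * μ * L * (L + μ)) • b - (L - μ) ^ 2 • g₀ - (L + μ) ^ 2 • g₁‖
  simp only [← real_inner_self_eq_norm_sq, add_sub_add_right_eq_sub, sub_add_cancel_right,
    inner_add_left, inner_add_right, inner_sub_left, inner_sub_right, inner_neg_left,
    inner_neg_right, real_inner_smul_right, real_inner_comm, smul_neg,
    zero_sub, sub_neg_eq_add] at h₀₁ hs₀ hs₁ hg hx hn₀ hn₁ ⊢
  have hK : 0 < L - μ := sub_pos.2 hμL
  have hL : 0 < L := hμ.trans hμL
  refine le_of_mul_le_mul_left ?_ (by positivity : 0 < 2 * L * (L - μ) * (L + 3 * μ))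
  linear_combination (L * (L + μ) * (L - μ) * (L + 3 * μ)) * h₀₁
    + (2 * μ * L * (L - μ) * (L + 3 * μ)) * hs₀ + (2 * μ * L * (L + μ) * (L + 3 * μ)) * hs₁
    + (μ * (L - μ)) * hn₀ + hn₁ + 4 * L * (L + 3 * μ) * (L - μ) * (L + μ) * hg
    - 2 * L * (L - μ) * (L + μ) ^ 2 * (L + 3 * μ) * hx

end Interpolation

theorem le_add_add_half_of_deriv_le {φ φ' : ℝ → ℝ} {c : ℝ} (hφ : ∀ t, HasDerivAt φ (φ' t) t)
    (hφ' : ∀ t ∈ Ico (0 : ℝ) 1, φ' t ≤ φ' 0 + c * t) : φ 1 ≤ φ 0 + φ' 0 + c / 2 := by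
  have hB (t : ℝ) : HasDerivAt (fun s => φ 0 + φ' 0 * s + c / 2 * s ^ 2) (φ' 0 + c * t) t :=
    ((((hasDerivAt_id' t).const_mul (φ' 0)).const_add (φ 0)).add
      ((hasDerivAt_pow 2 t).const_mul (c / 2))).congr_deriv (by ring)
  have := image_le_of_deriv_right_le_deriv_boundary
    (fun t _ => (hφ t).continuousAt.continuousWithinAt) (fun t _ => (hφ t).hasDerivWithinAt)
    (by simp) (fun t _ => (hB t).continuousAt.continuousWithinAt)
    (fun t _ => (hB t).hasDerivWithinAt) hφ' (right_mem_Icc.2 zero_le_one)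
  simpa using this

section Gradient

variable {E : Type*} [NormedAddCommGroup E] [InnerProductSpace ℝ E] [CompleteSpace E]
  {f : E → ℝ}

theorem hasDerivAt_comp_add_smul (hf : Differentiable ℝ f) (x v : E) (t : ℝ) :
    HasDerivAt (fun s : ℝ => f (x + s • v)) ⟪gradient f (x + t • v), v⟫ t := by
  have hline : HasDerivAt (fun s : ℝ => x + s • v) v t := by
    simpa using ((hasDerivAt_id t).smul_const v).const_add x
  rw [inner_gradient_left]
  exact (hf _).hasFDerivAt.comp_hasDerivAt t hline

theorem inner_gradient_eq_zero_of_forall_le (hf : Differentiable ℝ f) {x v : E} {s : ℝ}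
    (h : ∀ t : ℝ, f (x + s • v) ≤ f (x + t • v)) : ⟪gradient f (x + s • v), v⟫ = 0 :=
  IsLocalMin.hasDerivAt_eq_zero (Eventually.of_forall h) (hasDerivAt_comp_add_smul hf x v s)

theorem le_add_inner_gradient_add_sq_of_lipschitz {L : ℝ} (hf : Differentiable ℝ f)
    (hLip : ∀ x y, ‖gradient f x - gradient f y‖ ≤ L * ‖x - y‖) (x y : E) :
    f y ≤ f x + ⟪gradient f x, y - x⟫ + L / 2 * ‖y - x‖ ^ 2 := by
  set v := y - x
  have := le_add_add_half_of_deriv_le (c := L * ‖v‖ ^ 2) (hasDerivAt_comp_add_smul hf x v)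
    fun t ht => by
      have hLt := hLip (x + t • v) x
      rw [add_sub_cancel_left, norm_smul, Real.norm_of_nonneg ht.1] at hLt
      calc ⟪gradient f (x + t • v), v⟫
          = ⟪gradient f x, v⟫ + ⟪gradient f (x + t • v) - gradient f x, v⟫ := by
            rw [inner_sub_left]; ring
        _ ≤ ⟪gradient f x, v⟫ + L * (t * ‖v‖) * ‖v‖ := by
            gcongr
            exact (real_inner_le_norm _ _).trans (by gcongr)
        _ = ⟪gradient f (x + (0 : ℝ) • v), v⟫ + L * ‖v‖ ^ 2 * t := by simp; ring
  simpa [v, mul_div_right_comm] using this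

theorem add_inner_gradient_add_sq_le_of_strongMonotone {μ : ℝ} (hf : Differentiable ℝ f)
    (hSC : ∀ x y, μ * ‖x - y‖ ^ 2 ≤ ⟪gradient f x - gradient f y, x - y⟫) (x y : E) :
    f x + ⟪gradient f x, y - x⟫ + μ / 2 * ‖y - x‖ ^ 2 ≤ f y := by
  set v := y - x
  have := le_add_add_half_of_deriv_le (c := -(μ * ‖v‖ ^ 2))
    (fun t => (hasDerivAt_comp_add_smul hf x v t).neg) fun t ht => by
      have hmono : t * (μ * ‖v‖ ^ 2 * t) ≤ t * ⟪gradient f (x + t • v) - gradient f x, v⟫ := by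
        have := hSC (x + t • v) x
        rw [add_sub_cancel_left, norm_smul, real_inner_smul_right, Real.norm_of_nonneg ht.1]
          at this
        linarith
      rcases ht.1.eq_or_lt with rfl | ht₀
      · simp
      · have := le_of_mul_le_mul_left hmono ht₀
        rw [inner_sub_left] at this
        simp only [zero_smul, add_zero]
        linarith
  simp only [Pi.neg_apply, zero_smul, one_smul, add_zero, show x + v = y from add_sub_cancel x y]
    at this
  linarith

theorem exactLineSearch_gap_contraction_of_lt {μ L : ℝ} (hμ : 0 < μ) (hμL : μ < L)
    (hf : Differentiable ℝ f)
    (hLip : ∀ x y, ‖gradient f x - gradient f y‖ ≤ L * ‖x - y‖)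
    (hSC : ∀ x y, μ * ‖x - y‖ ^ 2 ≤ ⟪gradient f x - gradient f y, x - y⟫)
    {xs : E} (hxs : ∀ x, f xs ≤ f x) {x y : E} {γ : ℝ} (hγ : y = x - γ • gradient f x)
    (hy : ∀ t : ℝ, f y ≤ f (x - t • gradient f x)) :
    f y - f xs ≤ ((L - μ) / (L + μ)) ^ 2 * (f x - f xs) := by
  have hI (a b : E) : InterpolationCondition μ L a (gradient f a) (f a) b (gradient f b) (f b) :=
    interpolationCondition_of_quadratic_bounds hμL
      (le_add_inner_gradient_add_sq_of_lipschitz hf hLip a)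
      (add_inner_gradient_add_sq_le_of_strongMonotone hf hSC b)
  have hxs_grad : gradient f xs = 0 := by
    simpa [gradient] using IsLocalMin.fderiv_eq_zero (Eventually.of_forall hxs)
  have hg : ⟪gradient f x, gradient f y⟫ = 0 := by
    have hline (t : ℝ) : x - t • gradient f x = x + t • -gradient f x := by
      rw [smul_neg, sub_eq_add_neg]
    have := inner_gradient_eq_zero_of_forall_le hf (s := γ) fun t => by
      rw [← hline, ← hline, ← hγ]; exact hy t
    rwa [← hline, ← hγ, inner_neg_right, neg_eq_zero, real_inner_comm] at this
  have hstep : ⟪gradient f y, x - y⟫ = 0 := by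
    rw [show x - y = γ • gradient f x by rw [hγ, sub_sub_cancel], real_inner_smul_right,
      real_inner_comm, hg, mul_zero]
  have key := gap_contraction_of_interpolationCondition hμ hμL (hI x y) (hxs_grad ▸ hI xs x)
    (hxs_grad ▸ hI xs y) hg hstep
  have hLμ : 0 < L + μ := by linarith
  rw [div_pow, div_mul_eq_mul_div, le_div_iff₀ (by positivity)]
  linarith

theorem exactLineSearch_gap_contraction {μ L : ℝ} (hμ : 0 < μ) (hμL : μ ≤ L)
    (hf : Differentiable ℝ f)
    (hLip : ∀ x y, ‖gradient f x - gradient f y‖ ≤ L * ‖x - y‖)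
    (hSC : ∀ x y, μ * ‖x - y‖ ^ 2 ≤ ⟪gradient f x - gradient f y, x - y⟫)
    {xs : E} (hxs : ∀ x, f xs ≤ f x) {x y : E} {γ : ℝ} (hγ : y = x - γ • gradient f x)
    (hy : ∀ t : ℝ, f y ≤ f (x - t • gradient f x)) :
    f y - f xs ≤ ((L - μ) / (L + μ)) ^ 2 * (f x - f xs) := by
  rcases hμL.lt_or_eq with hlt | rfl
  · exact exactLineSearch_gap_contraction_of_lt hμ hlt hf hLip hSC hxs hγ hy
  -- for `μ = L`, pass to the limit in the bound for the smaller moduli `m < μ`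
  have hρ : ContinuousAt (fun m => ((μ - m) / (μ + m)) ^ 2 * (f x - f xs)) μ := by
    have : μ + μ ≠ 0 := by positivity
    fun_prop (disch := assumption)
  refine ge_of_tendsto (hρ.tendsto.mono_left (nhdsWithin_le_nhds (s := Iio μ))) ?_
  filter_upwards [Ioo_mem_nhdsLT hμ] with m hm
  exact exactLineSearch_gap_contraction_of_lt hm.1 hm.2 hf hLip
    (fun u v => (mul_le_mul_of_nonneg_right hm.2.le (sq_nonneg _)).trans (hSC u v)) hxs hγ hy

end Gradient

/-- **Theorem (de Klerk–Glineur–Taylor).**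
For `f ∈ F_{μ,L}(ℝⁿ)` (continuously differentiable, `L`-Lipschitz gradient,
`μ`-strongly convex with `0 < μ ≤ L`), with global minimizer `x*`, every iteration of the
gradient method with exact line search satisfies
`f(x_{i+1}) − f* ≤ ((L − μ)/(L + μ))² (f(x_i) − f*)`. -/
theorem cauchy_linear_convergence_strongly_convex
    {n : ℕ} (μ L : ℝ) (hμ : 0 < μ) (hμL : μ ≤ L)
    (f : EuclideanSpace ℝ (Fin n) → ℝ) (hf : ContDiff ℝ 1 f)
    (hLip : ∀ x y : EuclideanSpace ℝ (Fin n),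
      ‖gradient f x - gradient f y‖ ≤ L * ‖x - y‖)
    (hSC : ∀ x y : EuclideanSpace ℝ (Fin n),
      ⟪gradient f x - gradient f y, x - y⟫ ≥ μ * ‖x - y‖ ^ 2)
    (xstar : EuclideanSpace ℝ (Fin n)) (hxstar : ∀ x, f xstar ≤ f x)
    (x : ℕ → EuclideanSpace ℝ (Fin n))
    (hstep : ∀ i : ℕ, ∃ γ : ℝ, x (i + 1) = x i - γ • gradient f (x i))
    (hels : ∀ i : ℕ, ∀ t : ℝ, f (x (i + 1)) ≤ f (x i - t • gradient f (x i))) :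
    ∀ i : ℕ, f (x (i + 1)) - f xstar ≤ ((L - μ) / (L + μ)) ^ 2 * (f (x i) - f xstar) := by
  intro i
  obtain ⟨γ, hγ⟩ := hstep i
  exact exactLineSearch_gap_contraction hμ hμL (hf.differentiable one_ne_zero) hLip hSC hxstar hγ
    (hels i)
end

section
/- Let f(x) = (1/2) xᵀQx + cᵀx, where Q ∈ ℝ^{n×n} is a symmetric positive semidefinite matrix with Q ≠ 0 and c ∈ ℝ^n. Assume there exists a vector x* minimizing f on ℝ^n and denote f* = f(x*). Let (x_i) be a sequence such that for each i there exists γ_i ∈ ℝ with x_{i+1} = x_i − γ_i ∇f(x_i) and f(x_{i+1}) ≤ f(x_i − t ∇f(x_i)) for every t ∈ ℝ. Then for all i ≥ 0, f(x_{i+1}) − f* ≤ (1 − λ⁺⁺_min(Q)/λ_max(Q))² (f(x_i) − f*), where λ⁺⁺_min(Q) is the smallest strictly positive eigenvalue of Q and λ_max(Q) is the largest eigenvalue of Q. -/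
/-!
Exact line search does at least as well as the fixed step `1 / λ_max`. With `d = x_i - x*`, the
first-order condition `Q x* + c = 0` gives `∇f(x_i) = Q d` and `f y - f* = ½ ⟪y - x*, Q (y - x*)⟫`.
Expanding `d` in an orthonormal eigenbasis `(b_j, λ_j)` of `Q`, the step `1 / λ_max` leaves
`½ ∑ λ_j (1 - λ_j / λ_max)² ⟪b_j, d⟫²`, and every nonzero `λ_j` lies in `[λ⁺⁺_min, λ_max]`, so
each term is at most `(1 - λ⁺⁺_min / λ_max)²` times the corresponding term `½ λ_j ⟪b_j, d⟫²` of
`f(x_i) - f*`.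
-/

open scoped RealInnerProductSpace Matrix

/-- The largest eigenvalue of a Hermitian real matrix. -/
noncomputable def lamMax {n : ℕ} {M : Matrix (Fin n) (Fin n) ℝ} (hM : M.IsHermitian) : ℝ :=
  ⨆ i, hM.eigenvalues i

/-- The smallest strictly positive eigenvalue of a Hermitian real matrix. -/
noncomputable def lamPosMin {n : ℕ} {M : Matrix (Fin n) (Fin n) ℝ} (hM : M.IsHermitian) : ℝ :=
  sInf {e : ℝ | (∃ i, hM.eigenvalues i = e) ∧ 0 < e}

section Quadratic

variable {E : Type*} [NormedAddCommGroup E] [InnerProductSpace ℝ E] {T : E →ₗ[ℝ] E}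

noncomputable def quadraticFun (T : E →ₗ[ℝ] E) (c x : E) : ℝ := 1 / 2 * ⟪x, T x⟫ + ⟪c, x⟫

theorem hasGradientAt_quadraticFun [CompleteSpace E] (hT : T.IsSymmetric) (c x : E) :
    HasGradientAt (quadraticFun T c) (T x + c) x := by
  let T' : E →L[ℝ] E := ⟨T, hT.continuous⟩
  have hquad : HasFDerivAt (fun y : E => ⟪y, T' y⟫)
      ((fderivInnerCLM ℝ (x, T' x)).comp ((ContinuousLinearMap.id ℝ E).prod T')) x :=
    (hasFDerivAt_id x).inner ℝ T'.hasFDerivAt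
  refine hasGradientAt_iff_hasFDerivAt.2
    (((hquad.const_mul (1 / 2 : ℝ)).add (innerSL ℝ c).hasFDerivAt).congr_fderiv ?_)
  refine ContinuousLinearMap.ext fun h => ?_
  simp only [one_div, ContinuousLinearMap.coe_mk', add_apply,
    smul_apply, ContinuousLinearMap.comp_apply, ContinuousLinearMap.prod_apply,
    ContinuousLinearMap.id_apply, fderivInnerCLM_apply, smul_eq_mul, coe_innerSL_apply, map_add,
    InnerProductSpace.toDual_apply_apply, add_left_inj, T']
  rw [← hT x h, real_inner_comm (T x) h]
  ring

theorem map_add_eq_zero_of_isLocalMin_quadraticFun [CompleteSpace E] (hT : T.IsSymmetric)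
    {c x : E} (hx : IsLocalMin (quadraticFun T c) x) : T x + c = 0 :=
  (InnerProductSpace.toDual ℝ E).map_eq_zero_iff.1 <|
    hx.hasFDerivAt_eq_zero (hasGradientAt_iff_hasFDerivAt.1 (hasGradientAt_quadraticFun hT c x))

theorem quadraticFun_sub_eq_of_map_add_eq_zero (hT : T.IsSymmetric) {c x₀ : E}
    (hx₀ : T x₀ + c = 0) (y : E) :
    quadraticFun T c y - quadraticFun T c x₀ = 1 / 2 * ⟪y - x₀, T (y - x₀)⟫ := by
  have hc : c = -T x₀ := eq_neg_of_add_eq_zero_right hx₀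
  simp only [quadraticFun, hc, map_sub, inner_sub_left, inner_sub_right, inner_neg_left]
  rw [hT x₀ y, real_inner_comm x₀ (T x₀), ← hT y x₀, real_inner_comm x₀ (T y)]
  ring

theorem inner_map_self_eq_sum {ι : Type*} [Fintype ι] (hT : T.IsSymmetric)
    (b : OrthonormalBasis ι ℝ E) {e : ι → ℝ} (hb : ∀ j, T (b j) = e j • b j) (v : E) :
    ⟪v, T v⟫ = ∑ j, e j * ⟪b j, v⟫ ^ 2 := by
  rw [← b.sum_inner_mul_inner v (T v)]
  refine Finset.sum_congr rfl fun j _ => ?_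
  rw [← hT, hb, real_inner_smul_left, real_inner_comm v]
  ring

theorem inner_map_self_sub_smul_le {ι : Type*} [Fintype ι] (hT : T.IsSymmetric)
    (b : OrthonormalBasis ι ℝ E) {e : ι → ℝ} (hb : ∀ j, T (b j) = e j • b j) {t r : ℝ}
    (h : ∀ j, e j * (1 - t * e j) ^ 2 ≤ r * e j) (v : E) :
    ⟪v - t • T v, T (v - t • T v)⟫ ≤ r * ⟪v, T v⟫ := by
  have hcoord : ∀ j, ⟪b j, v - t • T v⟫ = (1 - t * e j) * ⟪b j, v⟫ := fun j => by
    rw [inner_sub_right, real_inner_smul_right, ← hT, hb, real_inner_smul_left]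
    ring
  rw [inner_map_self_eq_sum hT b hb, inner_map_self_eq_sum hT b hb, Finset.mul_sum]
  refine Finset.sum_le_sum fun j _ => ?_
  rw [hcoord, mul_pow, ← mul_assoc, ← mul_assoc]
  exact mul_le_mul_of_nonneg_right (h j) (sq_nonneg _)

end Quadratic

namespace Matrix

variable {n : ℕ} {M : Matrix (Fin n) (Fin n) ℝ}

theorem IsHermitian.eigenvalues_le_lamMax (hM : M.IsHermitian) (j : Fin n) :
    hM.eigenvalues j ≤ lamMax hM :=
  le_ciSup (Set.finite_range _).bddAbove j

theorem IsHermitian.lamPosMin_le_eigenvalues (hM : M.IsHermitian) {j : Fin n}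
    (hj : 0 < hM.eigenvalues j) : lamPosMin hM ≤ hM.eigenvalues j :=
  csInf_le ⟨0, fun _ he => he.2.le⟩ ⟨⟨j, rfl⟩, hj⟩

theorem IsHermitian.toEuclideanLin_eigenvectorBasis (hM : M.IsHermitian) (j : Fin n) :
    M.toEuclideanLin (hM.eigenvectorBasis j) = hM.eigenvalues j • hM.eigenvectorBasis j := by
  rw [toEuclideanLin, toLpLin_apply, hM.mulVec_eigenvectorBasis]
  rfl

theorem PosSemidef.eigenvalues_mul_one_sub_inv_mul_sq_le (hM : M.PosSemidef) (j : Fin n) :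
    hM.isHermitian.eigenvalues j *
        (1 - (lamMax hM.isHermitian)⁻¹ * hM.isHermitian.eigenvalues j) ^ 2 ≤
      (1 - lamPosMin hM.isHermitian / lamMax hM.isHermitian) ^ 2 *
        hM.isHermitian.eigenvalues j := by
  set L := lamMax hM.isHermitian
  set e := hM.isHermitian.eigenvalues j
  have he0 : 0 ≤ e := hM.eigenvalues_nonneg j
  rcases he0.eq_or_lt with he | he
  · simp [← he]
  have heL : e ≤ L := hM.isHermitian.eigenvalues_le_lamMax j
  have hμe : lamPosMin hM.isHermitian ≤ e := hM.isHermitian.lamPosMin_le_eigenvalues he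
  have hL : 0 < L := he.trans_le heL
  have h0 : 0 ≤ 1 - L⁻¹ * e := sub_nonneg.2 (inv_mul_le_one_of_le₀ heL hL.le)
  have h1 : 1 - L⁻¹ * e ≤ 1 - lamPosMin hM.isHermitian / L := by
    rw [inv_mul_eq_div]
    gcongr
  rw [mul_comm]
  exact mul_le_mul_of_nonneg_right (pow_le_pow_left₀ h0 h1 2) he0

end Matrix

theorem cauchy_linear_convergence_psd_quadratic_general
    {n : ℕ} (Q : Matrix (Fin n) (Fin n) ℝ) (hQ : Q.PosSemidef)
    (c : EuclideanSpace ℝ (Fin n))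
    (f : EuclideanSpace ℝ (Fin n) → ℝ)
    (hf : ∀ x, f x = (1 / 2) * ⟪x, Matrix.toEuclideanLin Q x⟫ + ⟪c, x⟫)
    (xstar : EuclideanSpace ℝ (Fin n)) (hxstar : ∀ x, f xstar ≤ f x)
    (x : ℕ → EuclideanSpace ℝ (Fin n))
    (hels : ∀ i : ℕ, ∀ t : ℝ, f (x (i + 1)) ≤ f (x i - t • gradient f (x i))) :
    ∀ i : ℕ, f (x (i + 1)) - f xstar ≤
      (1 - lamPosMin hQ.isHermitian / lamMax hQ.isHermitian) ^ 2 * (f (x i) - f xstar) := by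
  intro i
  obtain rfl : f = quadraticFun Q.toEuclideanLin c := funext hf
  have hT : Q.toEuclideanLin.IsSymmetric :=
    Matrix.isSymmetric_toEuclideanLin_iff.2 hQ.isHermitian
  have hcrit : Q.toEuclideanLin xstar + c = 0 :=
    map_add_eq_zero_of_isLocalMin_quadraticFun hT (.of_forall hxstar)
  have hgrad : gradient (quadraticFun Q.toEuclideanLin c) (x i) =
      Q.toEuclideanLin (x i - xstar) := by
    rw [(hasGradientAt_quadraticFun hT c (x i)).gradient, map_sub,
      eq_neg_of_add_eq_zero_left hcrit, sub_neg_eq_add]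
  set d := x i - xstar
  set L := lamMax hQ.isHermitian
  calc _ ≤ quadraticFun Q.toEuclideanLin c (x i - L⁻¹ • Q.toEuclideanLin d)
          - quadraticFun Q.toEuclideanLin c xstar := by
        rw [← hgrad]
        exact sub_le_sub_right (hels i L⁻¹) _
    _ = 1 / 2 *
          ⟪d - L⁻¹ • Q.toEuclideanLin d, Q.toEuclideanLin (d - L⁻¹ • Q.toEuclideanLin d)⟫ := by
        rw [quadraticFun_sub_eq_of_map_add_eq_zero hT hcrit, sub_right_comm]
    _ ≤ 1 / 2 * ((1 - lamPosMin hQ.isHermitian / L) ^ 2 * ⟪d, Q.toEuclideanLin d⟫) := by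
        gcongr
        exact inner_map_self_sub_smul_le hT hQ.isHermitian.eigenvectorBasis
          hQ.isHermitian.toEuclideanLin_eigenvectorBasis hQ.eigenvalues_mul_one_sub_inv_mul_sq_le d
    _ = _ := by
        rw [quadraticFun_sub_eq_of_map_add_eq_zero hT hcrit]
        ring

/-- **Corollary (semidefinite quadratic case).** For `f(x) = ½ xᵀQx + cᵀx` with `Q ≠ 0`
symmetric positive semidefinite, if `f` attains a minimizer `x*`, then the gradient method
with exact line search satisfies
`f(x_{i+1}) − f* ≤ (1 − λ⁺⁺_min(Q)/λ_max(Q))² (f(x_i) − f*)`. -/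
theorem cauchy_linear_convergence_psd_quadratic
    {n : ℕ} (Q : Matrix (Fin n) (Fin n) ℝ) (hQ : Q.PosSemidef) (hQ0 : Q ≠ 0)
    (c : EuclideanSpace ℝ (Fin n))
    (f : EuclideanSpace ℝ (Fin n) → ℝ)
    (hf : ∀ x, f x = (1 / 2) * ⟪x, Matrix.toEuclideanLin Q x⟫ + ⟪c, x⟫)
    (xstar : EuclideanSpace ℝ (Fin n)) (hxstar : ∀ x, f xstar ≤ f x)
    (x : ℕ → EuclideanSpace ℝ (Fin n))
    (hstep : ∀ i : ℕ, ∃ γ : ℝ, x (i + 1) = x i - γ • gradient f (x i))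
    (hels : ∀ i : ℕ, ∀ t : ℝ, f (x (i + 1)) ≤ f (x i - t • gradient f (x i))) :
    ∀ i : ℕ, f (x (i + 1)) - f xstar ≤
      (1 - lamPosMin hQ.isHermitian / lamMax hQ.isHermitian) ^ 2 * (f (x i) - f xstar) :=
  cauchy_linear_convergence_psd_quadratic_general Q hQ c f hf xstar hxstar x hels
end

section
/- Let 0 < μ̃ ≤ L̃ and 0 ≤ ε < 1. Let y₀, y₁, y* ∈ ℝ^m, g₀, g₁ ∈ ℝ^m, and h₀, h₁, h* ∈ ℝ satisfy: (1) h₀ ≥ h₁ + g₁ᵀ(y₀ − y₁) + (1/(2(1 − μ̃/L̃)))·((1/L̃)‖g₀ − g₁‖² + μ̃‖y₀ − y₁‖² − 2(μ̃/L̃)(g₁ − g₀)ᵀ(y₁ − y₀)); (2) h* ≥ h₀ + g₀ᵀ(y* − y₀) + (1/(2(1 − μ̃/L̃)))·((1/L̃)‖g₀‖² + μ̃‖y* − y₀‖² − 2(μ̃/L̃)g₀ᵀ(y₀ − y*)); (3) h* ≥ h₁ + g₁ᵀ(y* − y₁) + (1/(2(1 − μ̃/L̃)))·((1/L̃)‖g₁‖²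 + μ̃‖y* − y₁‖² − 2(μ̃/L̃)g₁ᵀ(y₁ − y*)); (4) 0 ≥ g₁ᵀ(y₁ − y₀); (5) 0 ≥ g₀ᵀg₁ − ε‖g₀‖‖g₁‖. Assume μ̃ < L̃. Then h₁ − h* ≤ ρ_ε² (h₀ − h*), where ρ_ε = (1 − κ_ε)/(1 + κ_ε) and κ_ε = (μ̃(1 − ε))/(L̃(1 + ε)). -/
/-!
Write `M = L(1+ε) - μ(1-ε)` and `P = L(1+ε) + μ(1-ε)`, so that `ρ_ε = M / P`. After clearing
denominators and translating to `y* = 0`, `h* = 0`, the quantity `2L(L-μ)M (M²h₀ - P²h₁)` is a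
nonnegative combination of the three interpolation inequalities, the line-search condition and
the relaxed orthogonality (in its AM-GM form `2MP⟪g₀, g₁⟫ ≤ ε(M²‖g₀‖² + P²‖g₁‖²)`), plus
`μM ‖M(g₀ - Ly₀) - P(g₁ - Ly₁)‖² + (1-ε) ‖M((L+μ)g₀ - 2μLy₀) + P(L-μ)g₁‖²`.
-/

open scoped RealInnerProductSpace

section
variable {E : Type*} [NormedAddCommGroup E] [InnerProductSpace ℝ E]

def InterpolationIneq (μ L : ℝ) (xi gi : E) (fi : ℝ) (xj gj : E) (fj : ℝ) : Prop :=
  ‖gi - gj‖ ^ 2 + μ * L * ‖xi - xj‖ ^ 2 - 2 * μ * ⟪gj - gi, xj - xi⟫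
    ≤ 2 * (L - μ) * (fi - fj - ⟪gj, xi - xj⟫)

theorem interpolationIneq_of_ge {μ L fi fj : ℝ} {xi gi xj gj : E} (hL : 0 < L) (hμL : μ < L)
    (h : fi ≥ fj + ⟪gj, xi - xj⟫ + (1 / (2 * (1 - μ / L))) *
      ((1 / L) * ‖gi - gj‖ ^ 2 + μ * ‖xi - xj‖ ^ 2 - 2 * (μ / L) * ⟪gj - gi, xj - xi⟫)) :
    InterpolationIneq μ L xi gi fi xj gj fj := by
  have hLμ : 0 < L - μ := sub_pos.2 hμL
  have hcoef : 1 / (2 * (1 - μ / L)) = L / (2 * (L - μ)) := by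
    field_simp
  rw [hcoef] at h
  unfold InterpolationIneq
  have := mul_le_mul_of_nonneg_left (sub_nonneg.2 h) (by positivity : (0:ℝ) ≤ 2 * (L - μ))
  field_simp at this
  linear_combination this

theorem InterpolationIneq.translate {μ L fi fj : ℝ} {xi gi xj gj : E}
    (h : InterpolationIneq μ L xi gi fi xj gj fj) (z : E) (c : ℝ) :
    InterpolationIneq μ L (xi - z) gi (fi - c) (xj - z) gj (fj - c) := by
  unfold InterpolationIneq at h ⊢
  simp only [sub_sub_sub_cancel_right]
  linarith

theorem two_mul_mul_inner_le_of_inner_le {ε a b : ℝ} {u v : E} (hε : 0 ≤ ε) (hab : 0 ≤ a * b)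
    (h : ⟪u, v⟫ ≤ ε * ‖u‖ * ‖v‖) :
    2 * a * b * ⟪u, v⟫ ≤ ε * (a ^ 2 * ‖u‖ ^ 2 + b ^ 2 * ‖v‖ ^ 2) :=
  calc 2 * a * b * ⟪u, v⟫ ≤ 2 * a * b * (ε * ‖u‖ * ‖v‖) := by
        rw [mul_assoc 2]; gcongr
    _ ≤ ε * (a ^ 2 * ‖u‖ ^ 2 + b ^ 2 * ‖v‖ ^ 2) := by
        nlinarith [mul_nonneg hε (sq_nonneg (a * ‖u‖ - b * ‖v‖))]

theorem sq_mul_le_sq_mul_of_interpolationIneq {μ L ε f0 f1 : ℝ} {x0 x1 g0 g1 : E}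
    (hμ : 0 < μ) (hμL : μ < L) (hε0 : 0 ≤ ε) (hε1 : ε < 1)
    (h01 : InterpolationIneq μ L x0 g0 f0 x1 g1 f1) (h0 : InterpolationIneq μ L 0 0 0 x0 g0 f0)
    (h1 : InterpolationIneq μ L 0 0 0 x1 g1 f1) (hls : ⟪g1, x1 - x0⟫ ≤ 0)
    (horth : ⟪g0, g1⟫ ≤ ε * ‖g0‖ * ‖g1‖) :
    (L * (1 + ε) + μ * (1 - ε)) ^ 2 * f1 ≤ (L * (1 + ε) - μ * (1 - ε)) ^ 2 * f0 := by
  have hL : 0 < L := hμ.trans hμL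
  have hLμ : 0 < L - μ := sub_pos.2 hμL
  have h1ε : 0 < 1 - ε := sub_pos.2 hε1
  have hM : 0 < L * (1 + ε) - μ * (1 - ε) := by nlinarith
  have hP : 0 < L * (1 + ε) + μ * (1 - ε) := by positivity
  have hamgm := two_mul_mul_inner_le_of_inner_le (a := L * (1 + ε) - μ * (1 - ε))
    (b := L * (1 + ε) + μ * (1 - ε)) hε0 (by positivity) horth
  have hS1 := real_inner_self_nonneg (x := (L * (1 + ε) - μ * (1 - ε)) • (g0 - L • x0)
    - (L * (1 + ε) + μ * (1 - ε)) • (g1 - L • x1))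
  have hS2 := real_inner_self_nonneg (x := (L * (1 + ε) - μ * (1 - ε)) • ((L + μ) • g0
    - (2 * μ * L) • x0) + ((L * (1 + ε) + μ * (1 - ε)) * (L - μ)) • g1)
  unfold InterpolationIneq at h01 h0 h1
  simp only [← real_inner_self_eq_norm_sq, inner_add_left, inner_add_right, inner_sub_left,
    inner_sub_right, real_inner_smul_left, real_inner_smul_right, inner_zero_left,
    inner_zero_right, real_inner_comm g0 g1, real_inner_comm g0 x0, real_inner_comm g0 x1,
    real_inner_comm g1 x0, real_inner_comm g1 x1, real_inner_comm x0 x1]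
    at h01 h0 h1 hls hamgm hS1 hS2
  refine le_of_mul_le_mul_left ?_
    (by positivity : 0 < 2 * L * (L - μ) * (L * (1 + ε) - μ * (1 - ε)))
  linear_combination (L * (L * (1 + ε) - μ * (1 - ε)) ^ 2 * (L * (1 + ε) + μ * (1 - ε))) * h01
    + (2 * L * μ * (1 - ε) * (L * (1 + ε) - μ * (1 - ε)) ^ 2) * h0
    + (2 * L * μ * (1 - ε) * (L * (1 + ε) - μ * (1 - ε)) * (L * (1 + ε) + μ * (1 - ε))) * h1
    + (2 * L * (L - μ) * (L * (1 + ε) - μ * (1 - ε)) * (L * (1 + ε) + μ * (1 - ε)) ^ 2) * hls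
    + (2 * L * (L - μ)) * hamgm + (μ * (L * (1 + ε) - μ * (1 - ε))) * hS1 + (1 - ε) * hS2
end

theorem core_contraction_lemma_general
    {m : ℕ} (μt Lt ε : ℝ) (hμt : 0 < μt) (hμtLt' : μt < Lt)
    (hε0 : 0 ≤ ε) (hε1 : ε < 1)
    (y0 y1 ystar g0 g1 : EuclideanSpace ℝ (Fin m)) (h0 h1 hstar : ℝ)
    (ineq1 : h0 ≥ h1 + ⟪g1, y0 - y1⟫ + (1 / (2 * (1 - μt / Lt))) *
      ((1 / Lt) * ‖g0 - g1‖ ^ 2 + μt * ‖y0 - y1‖ ^ 2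
        - 2 * (μt / Lt) * ⟪g1 - g0, y1 - y0⟫))
    (ineq2 : hstar ≥ h0 + ⟪g0, ystar - y0⟫ + (1 / (2 * (1 - μt / Lt))) *
      ((1 / Lt) * ‖g0‖ ^ 2 + μt * ‖ystar - y0‖ ^ 2
        - 2 * (μt / Lt) * ⟪g0, y0 - ystar⟫))
    (ineq3 : hstar ≥ h1 + ⟪g1, ystar - y1⟫ + (1 / (2 * (1 - μt / Lt))) *
      ((1 / Lt) * ‖g1‖ ^ 2 + μt * ‖ystar - y1‖ ^ 2
        - 2 * (μt / Lt) * ⟪g1, y1 - ystar⟫))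
    (ineq4 : (0 : ℝ) ≥ ⟪g1, y1 - y0⟫)
    (ineq5 : (0 : ℝ) ≥ ⟪g0, g1⟫ - ε * ‖g0‖ * ‖g1‖)
    (κε ρε : ℝ) (hκε : κε = μt * (1 - ε) / (Lt * (1 + ε)))
    (hρε : ρε = (1 - κε) / (1 + κε)) :
    h1 - hstar ≤ ρε ^ 2 * (h0 - hstar) := by
  have hL : 0 < Lt := hμt.trans hμtLt'
  have i01 := (interpolationIneq_of_ge hL hμtLt' ineq1).translate ystar hstar
  have i0 := (interpolationIneq_of_ge (gi := 0) hL hμtLt'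
    (by simpa only [zero_sub, norm_neg, sub_zero] using ineq2)).translate ystar hstar
  have i1 := (interpolationIneq_of_ge (gi := 0) hL hμtLt'
    (by simpa only [zero_sub, norm_neg, sub_zero] using ineq3)).translate ystar hstar
  rw [sub_self, sub_self] at i0 i1
  have key := sq_mul_le_sq_mul_of_interpolationIneq hμt hμtLt' hε0 hε1 i01 i0 i1
    (by rwa [sub_sub_sub_cancel_right]) (by linarith)
  have hP : 0 < Lt * (1 + ε) + μt * (1 - ε) := by nlinarith
  have hρ : ρε = (Lt * (1 + ε) - μt * (1 - ε)) / (Lt * (1 + ε) + μt * (1 - ε)) := by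
    have : Lt * (1 + ε) ≠ 0 := by nlinarith
    rw [hρε, hκε]
    field_simp
  rw [hρ, div_pow, div_mul_eq_mul_div, le_div_iff₀ (pow_pos hP 2)]
  linarith

/-- **Core contraction lemma.** Given the three `F_{μ̃,L̃}`-interpolability conditions for
`(y₀, h₀, g₀)`, `(y₁, h₁, g₁)` and a minimizer `(y*, h*, 0)`, the exact-line-search
condition `g₁ᵀ(y₁ − y₀) ≤ 0`, and the relaxed orthogonality `g₀ᵀg₁ ≤ ε‖g₀‖‖g₁‖`,
one has `h₁ − h* ≤ ρ_ε² (h₀ − h*)` where `ρ_ε = (1 − κ_ε)/(1 + κ_ε)` and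
`κ_ε = μ̃(1 − ε)/(L̃(1 + ε))`. -/
theorem core_contraction_lemma
    {m : ℕ} (μt Lt ε : ℝ) (hμt : 0 < μt) (hμtLt : μt ≤ Lt) (hμtLt' : μt < Lt)
    (hε0 : 0 ≤ ε) (hε1 : ε < 1)
    (y0 y1 ystar g0 g1 : EuclideanSpace ℝ (Fin m)) (h0 h1 hstar : ℝ)
    (ineq1 : h0 ≥ h1 + ⟪g1, y0 - y1⟫ + (1 / (2 * (1 - μt / Lt))) *
      ((1 / Lt) * ‖g0 - g1‖ ^ 2 + μt * ‖y0 - y1‖ ^ 2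
        - 2 * (μt / Lt) * ⟪g1 - g0, y1 - y0⟫))
    (ineq2 : hstar ≥ h0 + ⟪g0, ystar - y0⟫ + (1 / (2 * (1 - μt / Lt))) *
      ((1 / Lt) * ‖g0‖ ^ 2 + μt * ‖ystar - y0‖ ^ 2
        - 2 * (μt / Lt) * ⟪g0, y0 - ystar⟫))
    (ineq3 : hstar ≥ h1 + ⟪g1, ystar - y1⟫ + (1 / (2 * (1 - μt / Lt))) *
      ((1 / Lt) * ‖g1‖ ^ 2 + μt * ‖ystar - y1‖ ^ 2
        - 2 * (μt / Lt) * ⟪g1, y1 - ystar⟫))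
    (ineq4 : (0 : ℝ) ≥ ⟪g1, y1 - y0⟫)
    (ineq5 : (0 : ℝ) ≥ ⟪g0, g1⟫ - ε * ‖g0‖ * ‖g1‖)
    (κε ρε : ℝ) (hκε : κε = μt * (1 - ε) / (Lt * (1 + ε)))
    (hρε : ρε = (1 - κε) / (1 + κε)) :
    h1 - hstar ≤ ρε ^ 2 * (h0 - hstar) :=
  core_contraction_lemma_general μt Lt ε hμt hμtLt' hε0 hε1 y0 y1 ystar g0 g1 h0 h1 hstar ineq1
    ineq2 ineq3 ineq4 ineq5 κε ρε hκε hρε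
end

section
/- Let h : ℝ^m → ℝ be continuously differentiable such that for all y, z ∈ ℝ^m, ‖∇h(y) − ∇h(z)‖ ≤ L‖y − z‖ and ⟨∇h(y) − ∇h(z), y − z⟩ ≥ μ‖y − z‖², where 0 < μ ≤ L. Assume h attains its minimum on ℝ^m. Let A be an m × n real matrix with m ≤ n having full row rank, and define f(x) = h(Ax). Then the set S of minimizers of f on ℝ^n is a nonempty closed convex set, and for every x ∈ ℝ^n, letting x′ be the Euclidean projection of x onto S, one has ⟨∇f(x), x − x′⟩ ≥ μ·λ_min(AAᵀ)·‖x − x′‖², where λ_min(AAᵀ) > 0 is the smallest eigenvalue of AAᵀ. -/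
/-!
Strong monotonicity of `∇h` makes the minimizer `y⋆` of `h` unique, and since `A` is onto, the
minimizer set of `f` is the affine subspace `A⁻¹{y⋆}`. The projection residual `v = x - x′` is
orthogonal to `ker A`, so `v = Aᵀu`; Cauchy–Schwarz on `‖v‖² = ⟪A v, u⟫` together with the
Rayleigh bound `‖Aᵀu‖² = ⟪AAᵀu, u⟫ ≥ λ_min(AAᵀ)‖u‖²` yields `‖A v‖² ≥ λ_min(AAᵀ)‖v‖²`. As
`∇f(x) = Aᵀ∇h(Ax)` and `∇h(Ax′) = ∇h(y⋆) = 0`,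
`⟪∇f(x), v⟫ = ⟪∇h(Ax) - ∇h(Ax′), Ax - Ax′⟫ ≥ μ‖A v‖² ≥ μ λ_min(AAᵀ)‖v‖²`.
-/

open scoped RealInnerProductSpace Matrix

/-- The smallest eigenvalue of a Hermitian real matrix. -/
noncomputable def lamMin {m : ℕ} {M : Matrix (Fin m) (Fin m) ℝ} (hM : M.IsHermitian) : ℝ :=
  ⨅ i, hM.eigenvalues i

namespace Matrix

open scoped ComplexOrder

variable {𝕜 : Type*} [RCLike 𝕜] {m n : Type*} [Fintype m] [Fintype n]

theorem linearIndependent_row_of_rank_eq {K : Type*} [Field K] (A : Matrix m n K)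
    (hA : A.rank = Fintype.card m) : LinearIndependent K A.row := by
  rw [linearIndependent_iff_card_eq_finrank_span, ← hA, rank_eq_finrank_span_row]
  rfl

theorem posDef_mul_conjTranspose_self_of_rank_eq (A : Matrix m n 𝕜)
    (hA : A.rank = Fintype.card m) : (A * Aᴴ).PosDef :=
  .mul_conjTranspose_self A (vecMul_injective_iff.mpr (A.linearIndependent_row_of_rank_eq hA))

variable [DecidableEq n]

theorem toEuclideanLin_surjective_of_rank_eq (A : Matrix m n 𝕜) (hA : A.rank = Fintype.card m) :
    Function.Surjective (toEuclideanLin A) := by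
  rw [← LinearMap.range_eq_top]
  apply Submodule.eq_top_of_finrank_eq
  rw [finrank_euclideanSpace, ← hA,
    rank_eq_finrank_range_toLin A (PiLp.basisFun 2 𝕜 m) (PiLp.basisFun 2 𝕜 n)]
  rfl

end Matrix

section LamMin

variable {m : ℕ} {M : Matrix (Fin m) (Fin m) ℝ} (hM : M.IsHermitian)

theorem lamMin_le_eigenvalues (i : Fin m) : lamMin hM ≤ hM.eigenvalues i :=
  ciInf_le (Set.finite_range _).bddBelow i

theorem lamMin_pos_of_posDef [NeZero m] (hpos : M.PosDef) : 0 < lamMin hM := by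
  obtain ⟨i, hi⟩ := exists_eq_ciInf_of_finite (f := hM.eigenvalues)
  rw [lamMin, ← hi]
  exact hpos.eigenvalues_pos i

theorem Matrix.IsHermitian.toEuclideanLin_eigenvectorBasis_s9 (i : Fin m) :
    Matrix.toEuclideanLin M (hM.eigenvectorBasis i) = hM.eigenvalues i • hM.eigenvectorBasis i :=
  congrArg (WithLp.toLp 2) (hM.mulVec_eigenvectorBasis i)

theorem lamMin_mul_norm_sq_le_inner (u : EuclideanSpace ℝ (Fin m)) :
    lamMin hM * ‖u‖ ^ 2 ≤ ⟪Matrix.toEuclideanLin M u, u⟫ := by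
  set b := hM.eigenvectorBasis
  have hsymm := Matrix.isSymmetric_toEuclideanLin_iff.mpr hM
  rw [← real_inner_self_eq_norm_sq, ← b.sum_inner_mul_inner, ← b.sum_inner_mul_inner,
    Finset.mul_sum]
  refine Finset.sum_le_sum fun i _ => ?_
  rw [hsymm, hM.toEuclideanLin_eigenvectorBasis_s9, real_inner_smul_right, real_inner_comm (b i) u,
    mul_assoc]
  exact mul_le_mul_of_nonneg_right (lamMin_le_eigenvalues hM i) (mul_self_nonneg _)

theorem lamMin_mul_norm_sq_le_norm_adjoint_sq {n : ℕ} (A : Matrix (Fin m) (Fin n) ℝ)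
    (u : EuclideanSpace ℝ (Fin m)) :
    lamMin (Matrix.isHermitian_mul_conjTranspose_self A) * ‖u‖ ^ 2 ≤
      ‖(Matrix.toEuclideanLin A).adjoint u‖ ^ 2 := by
  have hAAu : Matrix.toEuclideanLin (A * Aᴴ) u =
      Matrix.toEuclideanLin A ((Matrix.toEuclideanLin A).adjoint u) := by
    simp [← Matrix.toEuclideanLin_conjTranspose_eq_adjoint]
  have hquad : ⟪Matrix.toEuclideanLin (A * Aᴴ) u, u⟫ =
      ‖(Matrix.toEuclideanLin A).adjoint u‖ ^ 2 := by
    rw [hAAu, ← LinearMap.adjoint_inner_right, real_inner_self_eq_norm_sq]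
  exact hquad ▸ lamMin_mul_norm_sq_le_inner _ u

end LamMin

section

variable {E F : Type*} [NormedAddCommGroup E] [InnerProductSpace ℝ E]
  [NormedAddCommGroup F] [InnerProductSpace ℝ F]

theorem sub_mem_orthogonal_of_forall_norm_le (K : Submodule ℝ E) {x p : E}
    (h : ∀ w ∈ K, ‖x - p‖ ≤ ‖x - (p + w)‖) : x - p ∈ Kᗮ := by
  have hinf : ‖x - p - 0‖ = ⨅ w : (K : Set E), ‖x - p - w‖ := by
    refine le_antisymm (le_ciInf fun w => by simpa [sub_sub] using h w w.2) ?_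
    simpa using ciInf_le (f := fun w : (K : Set E) => ‖x - p - w‖)
      ⟨0, Set.forall_mem_range.mpr fun w => norm_nonneg _⟩ ⟨0, K.zero_mem⟩
  rw [Submodule.mem_orthogonal']
  simpa using (K.norm_eq_iInf_iff_real_inner_eq_zero K.zero_mem).mp hinf

theorem gradient_eq_zero_of_forall_le [CompleteSpace E] {h : E → ℝ} {y : E}
    (hy : ∀ z, h y ≤ h z) : gradient h y = 0 := by
  simp [gradient, IsLocalMin.fderiv_eq_zero (Filter.Eventually.of_forall hy)]

theorem eq_of_forall_le_of_strongly_monotone_gradient [CompleteSpace E] {h : E → ℝ} {μ : ℝ}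
    (hμ : 0 < μ) (hSC : ∀ y z, μ * ‖y - z‖ ^ 2 ≤ ⟪gradient h y - gradient h z, y - z⟫)
    {y z : E} (hy : ∀ w, h y ≤ h w) (hz : ∀ w, h z ≤ h w) : y = z := by
  have hle := hSC y z
  rw [gradient_eq_zero_of_forall_le hy, gradient_eq_zero_of_forall_le hz, sub_zero,
    inner_zero_left] at hle
  have hsq : ‖y - z‖ ^ 2 ≤ 0 := nonpos_of_mul_nonpos_right hle hμ
  simpa [sub_eq_zero] using le_antisymm hsq (sq_nonneg _)

theorem inner_gradient_comp_linearMap [FiniteDimensional ℝ E] [CompleteSpace F] (h : F → ℝ)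
    (T : E →ₗ[ℝ] F) {x : E} (hh : DifferentiableAt ℝ h (T x)) (v : E) :
    ⟪gradient (h ∘ T) x, v⟫ = ⟪gradient h (T x), T v⟫ := by
  let T' := LinearMap.toContinuousLinearMap T
  have hcomp : fderiv ℝ (h ∘ T') x = (fderiv ℝ h (T' x)).comp T' :=
    (fderiv_comp x hh T'.differentiableAt).trans (congrArg _ T'.fderiv)
  rw [inner_gradient_left, inner_gradient_left]
  exact congrArg (· v) hcomp

theorem LinearMap.mul_norm_sq_le_norm_apply_sq_of_mem_orthogonal_ker [FiniteDimensional ℝ E]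
    [FiniteDimensional ℝ F] (T : E →ₗ[ℝ] F) {c : ℝ}
    (hT : ∀ u, c * ‖u‖ ^ 2 ≤ ‖T.adjoint u‖ ^ 2) {v : E} (hv : v ∈ (LinearMap.ker T)ᗮ) :
    c * ‖v‖ ^ 2 ≤ ‖T v‖ ^ 2 := by
  rw [LinearMap.orthogonal_ker] at hv
  obtain ⟨u, rfl⟩ := hv
  have hCS : ‖T.adjoint u‖ ^ 2 ≤ ‖T (T.adjoint u)‖ * ‖u‖ := by
    rw [← real_inner_self_eq_norm_sq, LinearMap.adjoint_inner_right]
    exact real_inner_le_norm _ _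
  have hu := hT u
  rcases le_or_gt c 0 with hc | hc
  · exact (mul_nonpos_of_nonpos_of_nonneg hc (sq_nonneg _)).trans (sq_nonneg _)
  rcases (norm_nonneg (T.adjoint u)).eq_or_lt with hw | hw
  · rw [← hw, zero_pow two_ne_zero, mul_zero]
    positivity
  refine le_of_mul_le_mul_right ?_ (pow_pos hw 2)
  calc c * ‖T.adjoint u‖ ^ 2 * ‖T.adjoint u‖ ^ 2 = c * (‖T.adjoint u‖ ^ 2) ^ 2 := by ring
    _ ≤ c * (‖T (T.adjoint u)‖ * ‖u‖) ^ 2 := by gcongr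
    _ = ‖T (T.adjoint u)‖ ^ 2 * (c * ‖u‖ ^ 2) := by ring
    _ ≤ ‖T (T.adjoint u)‖ ^ 2 * ‖T.adjoint u‖ ^ 2 := by gcongr

end

theorem Function.Surjective.setOf_forall_comp_le_eq_preimage {α β γ : Type*} [Preorder γ]
    {g : α → β} (hg : Function.Surjective g) (h : β → γ) :
    {x | ∀ x', h (g x) ≤ h (g x')} = g ⁻¹' {y | ∀ y', h y ≤ h y'} :=
  Set.ext fun x => (hg.forall (p := fun y => h (g x) ≤ h y)).symm

theorem composite_is_restricted_strongly_convex_general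
    {m n : ℕ} (hm : 0 < m)
    (μ : ℝ) (hμ : 0 < μ)
    (h : EuclideanSpace ℝ (Fin m) → ℝ) (hh : ContDiff ℝ 1 h)
    (hSC : ∀ y z : EuclideanSpace ℝ (Fin m),
      ⟪gradient h y - gradient h z, y - z⟫ ≥ μ * ‖y - z‖ ^ 2)
    (hattain : ∃ y, ∀ z, h y ≤ h z)
    (A : Matrix (Fin m) (Fin n) ℝ) (hrank : A.rank = m)
    (f : EuclideanSpace ℝ (Fin n) → ℝ)
    (hf : ∀ x, f x = h (Matrix.toEuclideanLin A x))
    (S : Set (EuclideanSpace ℝ (Fin n))) (hS : S = {x | ∀ y, f x ≤ f y}) :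
    S.Nonempty ∧ IsClosed S ∧ Convex ℝ S ∧
      0 < lamMin (Matrix.isHermitian_mul_conjTranspose_self A) ∧
      ∀ x x' : EuclideanSpace ℝ (Fin n), x' ∈ S → (∀ z ∈ S, dist x x' ≤ dist x z) →
        ⟪gradient f x, x - x'⟫ ≥
          μ * lamMin (Matrix.isHermitian_mul_conjTranspose_self A) * ‖x - x'‖ ^ 2 := by
  have : NeZero m := ⟨hm.ne'⟩
  obtain ⟨y₀, hy₀⟩ := hattain
  set T := Matrix.toEuclideanLin A
  have hrank' : A.rank = Fintype.card (Fin m) := hrank.trans (Fintype.card_fin m).symm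
  have hT : Function.Surjective T := A.toEuclideanLin_surjective_of_rank_eq hrank'
  have hfT : f = h ∘ T := funext hf
  have hmin : {y | ∀ z, h y ≤ h z} = {y₀} := Set.eq_singleton_iff_unique_mem.mpr
    ⟨hy₀, fun y hy => eq_of_forall_le_of_strongly_monotone_gradient hμ hSC hy hy₀⟩
  have hST : S = T ⁻¹' {y₀} := by
    rw [hS, hfT, ← hmin]
    exact hT.setOf_forall_comp_le_eq_preimage h
  obtain ⟨x₀, hx₀⟩ := hT y₀
  refine ⟨⟨x₀, hST ▸ hx₀⟩, hST ▸ isClosed_singleton.preimage T.continuous_of_finiteDimensional,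
    hST ▸ (convex_singleton y₀).linear_preimage T,
    lamMin_pos_of_posDef _ (A.posDef_mul_conjTranspose_self_of_rank_eq hrank'), ?_⟩
  intro x x' hx' hnear
  have hTx' : T x' = y₀ := by rwa [hST] at hx'
  have horth : x - x' ∈ (LinearMap.ker T)ᗮ :=
    sub_mem_orthogonal_of_forall_norm_le _ fun w hw => by
      simpa only [dist_eq_norm] using hnear (x' + w) (by simp [hST, hTx', LinearMap.mem_ker.mp hw])
  have hgrad : ⟪gradient f x, x - x'⟫ = ⟪gradient h (T x) - gradient h (T x'), T x - T x'⟫ := by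
    rw [hfT, inner_gradient_comp_linearMap h T ((hh.differentiable one_ne_zero) _), map_sub, hTx',
      gradient_eq_zero_of_forall_le hy₀, sub_zero]
  calc μ * lamMin (Matrix.isHermitian_mul_conjTranspose_self A) * ‖x - x'‖ ^ 2
      ≤ μ * ‖T x - T x'‖ ^ 2 := by
        rw [mul_assoc, ← map_sub]
        exact mul_le_mul_of_nonneg_left (T.mul_norm_sq_le_norm_apply_sq_of_mem_orthogonal_ker
          (lamMin_mul_norm_sq_le_norm_adjoint_sq A) horth) hμ.le
    _ ≤ _ := hSC (T x) (T x')
    _ = _ := hgrad.symm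

/-- **Restricted strong convexity of `f(x) = h(Ax)`.** For `h ∈ F_{μ,L}(ℝᵐ)` attaining its
minimum and `A` an `m × n` matrix (`m ≤ n`) of full row rank, the minimizer set `S` of
`f(x) = h(Ax)` is nonempty, closed and convex, `λ_min(AAᵀ) > 0`, and for every `x`, letting
`x′` be the Euclidean projection of `x` onto `S` (the point of `S` nearest to `x`),
`⟨∇f(x), x − x′⟩ ≥ μ λ_min(AAᵀ) ‖x − x′‖²`.
(Over `ℝ`, the conjugate transpose `Aᴴ` coincides with the transpose `Aᵀ`.) -/
theorem composite_is_restricted_strongly_convex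
    {m n : ℕ} (hm : 0 < m) (hmn : m ≤ n)
    (μ L : ℝ) (hμ : 0 < μ) (hμL : μ ≤ L)
    (h : EuclideanSpace ℝ (Fin m) → ℝ) (hh : ContDiff ℝ 1 h)
    (hLip : ∀ y z : EuclideanSpace ℝ (Fin m),
      ‖gradient h y - gradient h z‖ ≤ L * ‖y - z‖)
    (hSC : ∀ y z : EuclideanSpace ℝ (Fin m),
      ⟪gradient h y - gradient h z, y - z⟫ ≥ μ * ‖y - z‖ ^ 2)
    (hattain : ∃ y, ∀ z, h y ≤ h z)
    (A : Matrix (Fin m) (Fin n) ℝ) (hrank : A.rank = m)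
    (f : EuclideanSpace ℝ (Fin n) → ℝ)
    (hf : ∀ x, f x = h (Matrix.toEuclideanLin A x))
    (S : Set (EuclideanSpace ℝ (Fin n))) (hS : S = {x | ∀ y, f x ≤ f y}) :
    S.Nonempty ∧ IsClosed S ∧ Convex ℝ S ∧
      0 < lamMin (Matrix.isHermitian_mul_conjTranspose_self A) ∧
      ∀ x x' : EuclideanSpace ℝ (Fin n), x' ∈ S → (∀ z ∈ S, dist x x' ≤ dist x z) →
        ⟪gradient f x, x - x'⟫ ≥
          μ * lamMin (Matrix.isHermitian_mul_conjTranspose_self A) * ‖x - x'‖ ^ 2 :=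
  composite_is_restricted_strongly_convex_general hm μ hμ h hh hSC hattain A hrank f hf S hS
end
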